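/- Let ℋ be a complex Hilbert space, H a bounded non-negative self-adjoint operator on ℋ, 𝔥 ⊆ ℋ a closed subspace with orthogonal projection P onto 𝔥, and K the compression of H to 𝔥. Let φ : [0,∞) → ℂ be a continuous admissible function. For τ > 0 define S(τ) on 𝔥 by S(τ)f = (1/τ)(f − P(φ(τH)f)), f ∈ 𝔥, with φ(τH) given by the continuous functional calculus. Then S(τ)f → iKf as τ → 0+ for every f ∈ 𝔥. -/

import Mathlib

open Filter Topology

set_option maxHeartbeats 1000000
set_option synthInstance.maxHeartbeats 400000

/-- The central step in the proof of **Theorem 3.1** (bounded case). The closed subspace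
`𝔥 ⊆ ℋ` is modelled by a Hilbert space `𝔥` with a linear isometric embedding
`J : 𝔥 → ℋ`; `P = J*` is the orthogonal projection onto `𝔥`, characterized by
`⟪P g, f⟫ = ⟪g, J f⟫`. For a bounded non-negative self-adjoint `H`, the compression
`K = P H J`, and a continuous admissible `φ`, the operators
`S(τ) = τ⁻¹ (I - P φ(τH) P)` on `𝔥` converge strongly to `iK` as `τ → 0+`. -/
theorem zeno_S_strong_convergence
    {ℋ : Type*} [NormedAddCommGroup ℋ] [InnerProductSpace ℂ ℋ] [CompleteSpace ℋ]
    {𝔥 : Type*} [NormedAddCommGroup 𝔥] [InnerProductSpace ℂ 𝔥] [CompleteSpace 𝔥]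
    (J : 𝔥 →ₗᵢ[ℂ] ℋ) (P : ℋ →L[ℂ] 𝔥)
    (hP : ∀ (g : ℋ) (f : 𝔥), (inner ℂ (P g) f : ℂ) = inner ℂ g (J f))
    (Hop : ℋ →L[ℂ] ℋ) (hsa : IsSelfAdjoint Hop)
    (hpos : ∀ g : ℋ, 0 ≤ (inner ℂ (Hop g) g : ℂ).re)
    (K : 𝔥 →L[ℂ] 𝔥) (hK : ∀ f : 𝔥, K f = P (Hop (J f)))
    (φ : ℝ → ℂ) (hφc : Continuous φ)
    (hφb : ∀ x : ℝ, 0 ≤ x → ‖φ x‖ ≤ 1) (hφ0 : φ 0 = 1)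
    (hφd : Tendsto (fun x : ℝ => (φ x - 1) / (x : ℂ)) (𝓝[>] 0) (𝓝 (-Complex.I)))
    (S : ℝ → (𝔥 →L[ℂ] 𝔥))
    (hS : ∀ τ : ℝ, 0 < τ → ∀ f : 𝔥,
      S τ f = (τ⁻¹ : ℝ) • (f - P (cfc (fun z : ℂ => φ (τ * z.re)) Hop (J f)))) :
    ∀ f : 𝔥, Tendsto (fun τ : ℝ => S τ f) (𝓝[>] 0) (𝓝 (Complex.I • K f)) := by
  intro f
  have hsn : IsStarNormal Hop := hsa.isStarNormal
  -- P ∘ J = id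
  have hPJ : ∀ v : 𝔥, P (J v) = v := by
    intro v
    apply ext_inner_right ℂ
    intro w
    rw [hP]
    exact J.inner_map_map v w
  -- P is a contraction
  have hPnorm : ∀ g : ℋ, ‖P g‖ ≤ ‖g‖ := by
    intro g
    have h1 := inner_self_eq_norm_sq (𝕜 := ℂ) (P g)
    have h3 := re_inner_le_norm (𝕜 := ℂ) g (J (P g))
    simp only [RCLike.re_to_complex] at h1 h3
    have h2 : (inner ℂ (P g) (P g) : ℂ).re = (inner ℂ g (J (P g)) : ℂ).re := by rw [hP]
    have h4 : ‖J (P g)‖ = ‖P g‖ := J.norm_map _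
    nlinarith [norm_nonneg (P g), norm_nonneg g]
  -- spectrum facts
  have hHpos : (0 : ℋ →L[ℂ] ℋ) ≤ Hop :=
    (ContinuousLinearMap.nonneg_iff_isPositive Hop).mpr ⟨hsa.isSymmetric, hpos⟩
  set M : ℝ := ‖Hop‖ with hM
  have hM0 : 0 ≤ M := norm_nonneg _
  have hspec : ∀ z ∈ spectrum ℂ Hop, z = (z.re : ℂ) ∧ 0 ≤ z.re ∧ z.re ≤ M := by
    intro z hz
    have h1 : z = (z.re : ℂ) := hsa.mem_spectrum_eq_re hz
    refine ⟨h1, ?_, ?_⟩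
    · have h2 : z.re ∈ spectrum ℝ Hop :=
        spectrum.of_algebraMap_mem (R := ℝ) (S := ℂ) (A := ℋ →L[ℂ] ℋ) (h1 ▸ hz)
      exact spectrum_nonneg_of_nonneg hHpos h2
    · rcases subsingleton_or_nontrivial ℋ with h | h
      · have : Subsingleton (ℋ →L[ℂ] ℋ) := by infer_instance
        simp [Subsingleton.elim Hop 0] at hz
      · have := spectrum.norm_le_norm_of_mem hz
        calc z.re ≤ ‖z‖ := Complex.re_le_norm z
          _ ≤ M := this
  -- the key identity
  have hkey : ∀ τ : ℝ, 0 < τ →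
      S τ f - Complex.I • K f =
        P ((cfc (fun z : ℂ => (τ:ℂ)⁻¹ * (1 - φ (τ * z.re)) - Complex.I * z) Hop) (J f)) := by
    intro τ hτ
    have hcφ : Continuous fun z : ℂ => φ (τ * z.re) :=
      hφc.comp (continuous_const.mul Complex.continuous_re)
    have hc1 : ContinuousOn (fun z : ℂ => (τ:ℂ)⁻¹ * (1 - φ (τ * z.re))) (spectrum ℂ Hop) :=
      (continuous_const.mul (continuous_const.sub hcφ)).continuousOn
    have hc2 : ContinuousOn (fun z : ℂ => Complex.I * z) (spectrum ℂ Hop) :=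
      (continuous_const.mul continuous_id).continuousOn
    have hcfc : cfc (fun z : ℂ => (τ:ℂ)⁻¹ * (1 - φ (τ * z.re)) - Complex.I * z) Hop
        = (τ:ℂ)⁻¹ • (1 - cfc (fun z : ℂ => φ (τ * z.re)) Hop) - Complex.I • Hop := by
      rw [cfc_sub _ _ Hop hc1 hc2,
        cfc_const_mul (τ:ℂ)⁻¹ (fun z : ℂ => 1 - φ (τ * z.re)) Hop ((continuous_const.sub hcφ).continuousOn),
        cfc_sub (fun _ : ℂ => (1:ℂ)) (fun z : ℂ => φ (τ * z.re)) Hop continuousOn_const hcφ.continuousOn,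
        cfc_const_mul_id Complex.I Hop, cfc_const (1:ℂ) Hop, map_one]
    rw [hcfc, hS τ hτ f, hK f]
    set A := cfc (fun z : ℂ => φ (τ * z.re)) Hop
    have : ((τ:ℂ)⁻¹ • (1 - A) - Complex.I • Hop) (J f)
        = (τ:ℂ)⁻¹ • (J f - A (J f)) - Complex.I • Hop (J f) := by
      simp [ContinuousLinearMap.sub_apply, ContinuousLinearMap.smul_apply,
        ContinuousLinearMap.one_apply]
    rw [this, map_sub, map_smul, map_smul, map_sub, hPJ]
    have hcast : (τ⁻¹ : ℝ) • (f - P (A (J f))) = ((τ:ℂ)⁻¹ : ℂ) • (f - P (A (J f))) := by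
      rw [← Complex.ofReal_inv]
      norm_cast
    rw [hcast]
  -- main estimate and convergence
  rw [Metric.tendsto_nhdsWithin_nhds]
  intro ε hε
  set ε' : ℝ := ε / ((M + 1) * (‖f‖ + 1)) with hε'def
  have hden : 0 < (M + 1) * (‖f‖ + 1) := by positivity
  have hε' : 0 < ε' := div_pos hε hden
  rw [Metric.tendsto_nhdsWithin_nhds] at hφd
  obtain ⟨δ, hδ0, hδ⟩ := hφd ε' hε'
  refine ⟨δ / (M + 1), by positivity, ?_⟩
  intro τ hτmem hτd
  have hτ : 0 < τ := hτmem
  rw [Real.dist_eq, sub_zero, abs_of_pos hτ] at hτd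
  -- bound the symbol on the spectrum
  have hbound : ∀ z ∈ spectrum ℂ Hop,
      ‖(τ:ℂ)⁻¹ * (1 - φ (τ * z.re)) - Complex.I * z‖ ≤ M * ε' := by
    intro z hz
    obtain ⟨h1, h2, h3⟩ := hspec z hz
    set x := z.re with hx
    rcases eq_or_lt_of_le h2 with h0 | h0
    · rw [h1, ← h0]
      simp [hφ0]
      positivity
    · have ht0 : 0 < τ * x := mul_pos hτ h0
      have htδ : τ * x < δ := by
        calc τ * x ≤ τ * (M + 1) := by nlinarith
          _ < δ := by
            rw [lt_div_iff₀ (by positivity)] at hτd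
            linarith
      have hclose : ‖(φ (τ * x) - 1) / ((τ * x : ℝ) : ℂ) + Complex.I‖ < ε' := by
        have := hδ (Set.mem_Ioi.mpr ht0) (by rw [Real.dist_eq, sub_zero, abs_of_pos ht0]; exact htδ)
        rwa [Complex.dist_eq, sub_neg_eq_add] at this
      have hid : (τ:ℂ)⁻¹ * (1 - φ (τ * x)) - Complex.I * z
          = -(x:ℂ) * ((φ (τ * x) - 1) / ((τ * x : ℝ) : ℂ) + Complex.I) := by
        rw [h1]
        have hτne : (τ:ℂ) ≠ 0 := by exact_mod_cast hτ.ne'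
        have hxne : (x:ℂ) ≠ 0 := by exact_mod_cast h0.ne'
        push_cast
        field_simp
        ring
      rw [hid, norm_mul, norm_neg, Complex.norm_real, Real.norm_of_nonneg h2]
      calc x * ‖(φ (τ * x) - 1) / ((τ * x : ℝ) : ℂ) + Complex.I‖
          ≤ M * ‖(φ (τ * x) - 1) / ((τ * x : ℝ) : ℂ) + Complex.I‖ := by
            apply mul_le_mul_of_nonneg_right h3 (norm_nonneg _)
        _ ≤ M * ε' := mul_le_mul_of_nonneg_left hclose.le hM0
  -- conclude
  have hcfcnorm : ‖cfc (fun z : ℂ => (τ:ℂ)⁻¹ * (1 - φ (τ * z.re)) - Complex.I * z) Hop‖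
      ≤ M * ε' := norm_cfc_le (by positivity) hbound
  have hstep : ‖S τ f - Complex.I • K f‖ ≤ M * ε' * ‖f‖ := by
    rw [hkey τ hτ]
    calc ‖P ((cfc (fun z : ℂ => (τ:ℂ)⁻¹ * (1 - φ (τ * z.re)) - Complex.I * z) Hop) (J f))‖
        ≤ ‖(cfc (fun z : ℂ => (τ:ℂ)⁻¹ * (1 - φ (τ * z.re)) - Complex.I * z) Hop) (J f)‖ :=
          hPnorm _
      _ ≤ ‖cfc (fun z : ℂ => (τ:ℂ)⁻¹ * (1 - φ (τ * z.re)) - Complex.I * z) Hop‖ * ‖J f‖ :=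
          ContinuousLinearMap.le_opNorm _ _
      _ ≤ M * ε' * ‖f‖ := by
          rw [J.norm_map]
          exact mul_le_mul_of_nonneg_right hcfcnorm (norm_nonneg f)
  rw [dist_eq_norm]
  have hfinal : M * ε' * ‖f‖ < ε := by
    have hεeq : ε' * ((M + 1) * (‖f‖ + 1)) = ε := div_mul_cancel₀ ε hden.ne'
    nlinarith [norm_nonneg f, hε'.le]
  linarith
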